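/- Let x, y, t ∈ ℂ with 1 + 4t ≠ 0, 1 - 12t not a negative real (so that √(1-12t) is defined by the principal branch) and 1 - 12t + 2√(1-12t) ≠ 0. Define u(x, y, t) = 4(5 - 12t + 4√(1-12t))²((-1 + 12t)x - 4y²) / (3(1 + 4t)(1 - 12t + 2√(1-12t))³). Then u satisfies the dispersionless KP (Zabolotskaya–Khokhlov) equation (u_t - (3/2) u u_x)_x = (3/4) u_{yy}. -/

import Mathlib

/-!
Since `u = a(t) x + b(t) y²`, the dKP equation reduces to the ODE `a' - (3/2) a² = (3/2) b`.
Writing `s = √(1 - 12t)`, one has `5 - 12t + 4s = (s + 2)²`, `1 - 12t + 2s = s (s + 2)` and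
`3 (1 + 4t) = (2 - s)(2 + s)`, so near `t` the amplitude is `4 / (s³ (2 - s))`; together with
`s' = -6 / s` (differentiate `s² = 1 - 12t`) the ODE becomes a rational identity in `s`.
-/

open Filter Topology Complex

section AffineQuadratic

variable {𝕜 : Type*} [NontriviallyNormedField 𝕜] [CharZero 𝕜]

theorem dKP_of_affine_quadratic {u : 𝕜 → 𝕜 → 𝕜 → 𝕜} {a b : 𝕜 → 𝕜} {a' b' : 𝕜}
    (hu : ∀ x y t, u x y t = a t * x + b t * y ^ 2) (x y t : 𝕜)
    (ha : HasDerivAt a a' t) (hb : HasDerivAt b b' t)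
    (hode : a' - 3 / 2 * a t ^ 2 = 3 / 2 * b t) :
    deriv (fun x' =>
        deriv (fun t' => u x' y t') t
          - (3 / 2) * u x' y t * deriv (fun x'' => u x'' y t) x') x
      = (3 / 4) * deriv (fun y' => deriv (fun y'' => u x y'' t) y') y := by
  have hu_t (x' : 𝕜) : deriv (fun t' => u x' y t') t = a' * x' + b' * y ^ 2 := by
    simp only [hu]
    exact ((ha.mul_const x').add (hb.mul_const _)).deriv
  have hu_x (x' : 𝕜) : deriv (fun x'' => u x'' y t) x' = a t := by
    simp only [hu]
    exact ((hasDerivAt_const_mul (a t)).add_const _).deriv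
  have hu_y (y' : 𝕜) : deriv (fun y'' => u x y'' t) y' = 2 * b t * y' := by
    simp only [hu]
    rw [(((hasDerivAt_pow 2 y').const_mul (b t)).const_add (a t * x)).deriv]
    ring
  have hflux : HasDerivAt (fun x' => a' * x' + b' * y ^ 2 - 3 / 2 * u x' y t * a t)
      (a' - 3 / 2 * a t ^ 2) x := by
    simp only [hu]
    exact (((hasDerivAt_const_mul a').add_const _).sub
      ((((hasDerivAt_const_mul (a t)).add_const _).const_mul _).mul_const _)).congr_deriv (by ring)
  simp only [hu_t, hu_x, hu_y]
  rw [hflux.deriv, (hasDerivAt_const_mul _).deriv, hode]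
  ring

end AffineQuadratic

noncomputable def example3Sqrt (t : ℂ) : ℂ := (1 - 12 * t) ^ ((1 : ℂ) / 2)

noncomputable def example3Amplitude (t : ℂ) : ℂ :=
  4 * (5 - 12 * t + 4 * example3Sqrt t) ^ 2
    / (3 * (1 + 4 * t) * (1 - 12 * t + 2 * example3Sqrt t) ^ 3)

theorem example3Sqrt_sq (t : ℂ) : example3Sqrt t ^ 2 = 1 - 12 * t := by
  rw [example3Sqrt, one_div]
  exact cpow_ofNat_inv_pow _ 2

theorem example3Sqrt_ne_zero_of_ne {t : ℂ} (hD : 1 - 12 * t + 2 * example3Sqrt t ≠ 0) :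
    example3Sqrt t ≠ 0 := by
  intro hs
  apply hD
  linear_combination (example3Sqrt t + 2) * hs - example3Sqrt_sq t

theorem two_sub_example3Sqrt_ne_zero {t : ℂ} (h1 : 1 + 4 * t ≠ 0) : 2 - example3Sqrt t ≠ 0 := by
  intro hs
  apply h1
  linear_combination ((example3Sqrt t + 2) * hs + example3Sqrt_sq t) / 3

theorem hasDerivAt_example3Sqrt {t : ℂ} (ht : 1 - 12 * t ∈ slitPlane) :
    HasDerivAt example3Sqrt (-6 / example3Sqrt t) t := by
  obtain ⟨s', hs'⟩ : ∃ s', HasDerivAt example3Sqrt s' t :=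
    ⟨_, ((hasDerivAt_const_mul (12 : ℂ)).const_sub 1 |>.cpow_const ht)⟩
  have hsq : HasDerivAt (fun t' => example3Sqrt t' ^ 2) (-12) t := by
    simp only [example3Sqrt_sq]
    exact ((hasDerivAt_const_mul (12 : ℂ)).const_sub 1).congr_deriv (by ring)
  have hs0 : example3Sqrt t ≠ 0 := by
    intro hs
    apply slitPlane_ne_zero ht
    rw [← example3Sqrt_sq, hs, zero_pow two_ne_zero]
  have hchain : 2 * example3Sqrt t * s' = -12 := by
    simpa using (hs'.pow 2).unique hsq
  rwa [show s' = -6 / example3Sqrt t by rw [eq_div_iff hs0]; linear_combination hchain / 2] at hs'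

theorem example3Amplitude_eq_of_ne {t : ℂ} (h1 : 1 + 4 * t ≠ 0)
    (hD : 1 - 12 * t + 2 * example3Sqrt t ≠ 0) :
    example3Amplitude t = 4 / (example3Sqrt t ^ 3 * (2 - example3Sqrt t)) := by
  have hs0 := example3Sqrt_ne_zero_of_ne hD
  have hs2 := two_sub_example3Sqrt_ne_zero h1
  have hsq := example3Sqrt_sq t
  set s := example3Sqrt t
  have hplus : s + 2 ≠ 0 := fun h => hD (by linear_combination s * h - hsq)
  rw [example3Amplitude, show 5 - 12 * t + 4 * s = (s + 2) ^ 2 by linear_combination -hsq,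
    show 1 - 12 * t + 2 * s = s * (s + 2) by linear_combination -hsq,
    show 3 * (1 + 4 * t) = (2 - s) * (s + 2) by linear_combination hsq]
  field_simp

theorem example3Amplitude_eventuallyEq {t : ℂ} (h1 : 1 + 4 * t ≠ 0) (ht : 1 - 12 * t ∈ slitPlane)
    (hD : 1 - 12 * t + 2 * example3Sqrt t ≠ 0) :
    example3Amplitude =ᶠ[𝓝 t] fun t' => 4 / (example3Sqrt t' ^ 3 * (2 - example3Sqrt t')) := by
  have hs := (hasDerivAt_example3Sqrt ht).continuousAt
  have h1' : ∀ᶠ t' in 𝓝 t, 1 + 4 * t' ≠ 0 :=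
    (continuousAt_const.add (continuousAt_const.mul continuousAt_id)).eventually_ne h1
  have hD' : ∀ᶠ t' in 𝓝 t, 1 - 12 * t' + 2 * example3Sqrt t' ≠ 0 :=
    ((continuousAt_const.sub (continuousAt_const.mul continuousAt_id)).add
      (continuousAt_const.mul hs)).eventually_ne hD
  filter_upwards [h1', hD'] with t' using example3Amplitude_eq_of_ne

theorem hasDerivAt_example3Amplitude {t : ℂ} (h1 : 1 + 4 * t ≠ 0) (ht : 1 - 12 * t ∈ slitPlane)
    (hD : 1 - 12 * t + 2 * example3Sqrt t ≠ 0) :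
    HasDerivAt example3Amplitude
      (24 * (6 - 4 * example3Sqrt t) / (example3Sqrt t ^ 5 * (2 - example3Sqrt t) ^ 2)) t := by
  have hs0 := example3Sqrt_ne_zero_of_ne hD
  have hs2 := two_sub_example3Sqrt_ne_zero h1
  have hs := hasDerivAt_example3Sqrt ht
  refine (((hasDerivAt_const t (4 : ℂ)).div ((hs.pow 3).mul (hs.const_sub 2))
    (mul_ne_zero (pow_ne_zero 3 hs0) hs2)).congr_deriv ?_).congr_of_eventuallyEq
    (example3Amplitude_eventuallyEq h1 ht hD)
  simp only [Pi.mul_apply, Pi.pow_apply]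
  field_simp
  ring

/-- The explicit function `u(x,y,t)` from Example 3 satisfies the dKP
(Zabolotskaya–Khokhlov) equation `(u_t - (3/2) u u_x)_x = (3/4) u_yy`,
with `√(1-12t)` the principal branch `(1-12t)^{1/2}`. -/
theorem example3_solves_dKP (u : ℂ → ℂ → ℂ → ℂ)
    (hu : ∀ x y t : ℂ,
      u x y t = 4 * (5 - 12 * t + 4 * (1 - 12 * t) ^ ((1 : ℂ) / 2)) ^ 2
          * ((-1 + 12 * t) * x - 4 * y ^ 2)
        / (3 * (1 + 4 * t)
            * (1 - 12 * t + 2 * (1 - 12 * t) ^ ((1 : ℂ) / 2)) ^ 3)) :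
    ∀ x y t : ℂ, 1 + 4 * t ≠ 0 → (1 - 12 * t) ∈ Complex.slitPlane →
      1 - 12 * t + 2 * (1 - 12 * t) ^ ((1 : ℂ) / 2) ≠ 0 →
      deriv (fun x' =>
          deriv (fun t' => u x' y t') t
            - (3 / 2) * u x' y t * deriv (fun x'' => u x'' y t) x') x
        = (3 / 4) * deriv (fun y' => deriv (fun y'' => u x y'' t) y') y := by
  intro x y t h1 ht hD
  have hA := hasDerivAt_example3Amplitude h1 ht hD
  refine dKP_of_affine_quadratic (a := fun t => (-1 + 12 * t) * example3Amplitude t)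
    (b := fun t => -4 * example3Amplitude t) (fun x y t => ?_) x y t
    (((hasDerivAt_const_mul (12 : ℂ)).const_add (-1)).mul hA) (hA.const_mul _) ?_
  · rw [hu, example3Amplitude, example3Sqrt]
    ring
  · have hs0 := example3Sqrt_ne_zero_of_ne hD
    have hs2 := two_sub_example3Sqrt_ne_zero h1
    rw [example3Amplitude_eq_of_ne h1 hD]
    have ht : t = (1 - example3Sqrt t ^ 2) / 12 := by linear_combination example3Sqrt_sq t / 12
    generalize example3Sqrt t = s at hs0 hs2 ht ⊢
    subst ht
    field_simp
    ring
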